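/- Let S be a real m×m matrix, A a real m×n matrix, d ∈ ℝ^m, M a real n×n matrix, and let Ω₁, Ω₂ be two disjoint sets with Ω₁ ∪ Ω₂ = {1,…,n}. Define J : ℝ^n → ℝ by J(f) = (1/2)‖S(d − Af)‖₂² + (1/2)Σ_{ℓ∈Ω₁}|(Mf)_ℓ| + (1/2)Σ_{ℓ∈Ω₂}(Mf)_ℓ². If the quadratic form f ↦ ‖SAf‖₂² + Σ_{ℓ∈Ω₂}(Mf)_ℓ² is positive definite (i.e., it vanishes only at f = 0), then J is strictly convex and has a unique minimizer on ℝ^n. -/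

import Mathlib

open Matrix Finset

noncomputable def enormSq {m : ℕ} (x : Fin m → ℝ) : ℝ := ∑ i, (x i) ^ 2

/-!
Along a segment, a sum of squares of affine functions satisfies
`g (a • x + b • y) = a * g x + b * g y - a * b * Q (x - y)`, where `Q` is the sum of the squares of
their linear parts; for the smooth part of `J` this `Q` is the quadratic form of the hypothesis, and
the ℓ¹ part is convex. Positive definiteness of `Q` makes the gap strictly positive, whence strict
convexity. By compactness of the unit sphere `Q ≥ c‖·‖²` with `c > 0`, so `J` grows quadratically;
being continuous it attains its minimum, which strict convexity makes unique.
-/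

open Filter

lemma Finset.sum_sq_add_mul_of_add_eq_one {ι : Type*} (s : Finset ι) (u v : ι → ℝ) {a b : ℝ}
    (hab : a + b = 1) :
    ∑ i ∈ s, (a * u i + b * v i) ^ 2
      = a * ∑ i ∈ s, u i ^ 2 + b * ∑ i ∈ s, v i ^ 2 - a * b * ∑ i ∈ s, (u i - v i) ^ 2 := by
  obtain rfl : b = 1 - a := by linarith
  simp only [Finset.mul_sum, ← Finset.sum_sub_distrib, ← Finset.sum_add_distrib]
  exact Finset.sum_congr rfl fun i _ => by ring

lemma enormSq_nonneg {m : ℕ} (x : Fin m → ℝ) : 0 ≤ enormSq x :=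
  Finset.sum_nonneg fun _ _ => sq_nonneg _

lemma enormSq_smul {m : ℕ} (r : ℝ) (x : Fin m → ℝ) : enormSq (r • x) = r ^ 2 * enormSq x := by
  simp only [enormSq, Pi.smul_apply, smul_eq_mul, mul_pow, Finset.mul_sum]

lemma half_enormSq_sub_le {m : ℕ} (u v : Fin m → ℝ) :
    (1 / 2) * enormSq v - enormSq u ≤ enormSq (u - v) := by
  simp only [enormSq, Finset.mul_sum, ← Finset.sum_sub_distrib]
  exact Finset.sum_le_sum fun i _ => by
    simp only [Pi.sub_apply]; nlinarith [sq_nonneg (2 * u i - v i)]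

section Convexity

variable {E : Type*}

lemma strictConvexOn_univ_of_le_sub_mul [AddCommGroup E] [Module ℝ E] {f q : E → ℝ}
    (hq : ∀ v ≠ 0, 0 < q v)
    (hf : ∀ x y : E, ∀ a b : ℝ, 0 < a → 0 < b → a + b = 1 →
      f (a • x + b • y) ≤ a * f x + b * f y - a * b * q (x - y)) :
    StrictConvexOn ℝ Set.univ f := by
  refine ⟨convex_univ, fun x _ y _ hxy a b ha hb hab => ?_⟩
  have hgap : 0 < a * b * q (x - y) := by
    have := hq _ (sub_ne_zero.mpr hxy)
    positivity
  simp only [smul_eq_mul]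
  linarith [hf x y a b ha hb hab]

variable [NormedAddCommGroup E]

lemma tendsto_cocompact_atTop_of_mul_norm_sq_sub_le [ProperSpace E] {f : E → ℝ} {c K : ℝ}
    (hc : 0 < c) (hf : ∀ x, c * ‖x‖ ^ 2 - K ≤ f x) : Tendsto f (cocompact E) atTop := by
  refine tendsto_atTop_mono hf ?_
  have : Tendsto (fun r : ℝ => c * r ^ 2 - K) atTop atTop :=
    tendsto_atTop_add_const_right _ _ ((tendsto_pow_atTop two_ne_zero).const_mul_atTop hc)
  exact this.comp tendsto_norm_cocompact_atTop

variable [NormedSpace ℝ E]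

lemma exists_pos_mul_norm_sq_le [FiniteDimensional ℝ E] {q : E → ℝ} (hq : Continuous q)
    (hsmul : ∀ (r : ℝ) v, q (r • v) = r ^ 2 * q v) (hpos : ∀ v ≠ 0, 0 < q v) :
    ∃ c > 0, ∀ v, c * ‖v‖ ^ 2 ≤ q v := by
  have hq0 : q 0 = 0 := by simpa using hsmul 0 0
  rcases subsingleton_or_nontrivial E with hE | hE
  · exact ⟨1, one_pos, fun v => by simp [Subsingleton.elim v 0, hq0]⟩
  obtain ⟨u₀, hu₀, hmin⟩ := (isCompact_sphere (0 : E) 1).exists_isMinOn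
    (NormedSpace.sphere_nonempty.mpr zero_le_one) hq.continuousOn
  refine ⟨q u₀, hpos u₀ (ne_zero_of_mem_unit_sphere ⟨u₀, hu₀⟩), fun v => ?_⟩
  rcases eq_or_ne v 0 with rfl | hv
  · simp [hq0]
  have hvn : ‖v‖ ≠ 0 := norm_ne_zero_iff.mpr hv
  have hunit : ‖v‖⁻¹ • v ∈ Metric.sphere (0 : E) 1 := by
    simp [norm_smul, hvn]
  calc q u₀ * ‖v‖ ^ 2 ≤ q (‖v‖⁻¹ • v) * ‖v‖ ^ 2 := by gcongr; exact hmin hunit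
    _ = q v := by
      rw [hsmul, inv_pow, mul_comm, ← mul_assoc, mul_inv_cancel₀ (pow_ne_zero 2 hvn), one_mul]

lemma StrictConvexOn.existsUnique_forall_le [ProperSpace E] {f : E → ℝ}
    (hf : StrictConvexOn ℝ Set.univ f) (hcont : Continuous f)
    (hcoer : Tendsto f (cocompact E) atTop) : ∃! x, ∀ y, f x ≤ f y := by
  obtain ⟨x, hx⟩ := hcont.exists_forall_le hcoer
  exact ⟨x, hx, fun y hy => hf.eq_of_isMinOn (fun z _ => hy z) (fun z _ => hx z) trivial trivial⟩

end Convexity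

section Subproblem

variable {m n : ℕ} (S : Matrix (Fin m) (Fin m) ℝ) (A : Matrix (Fin m) (Fin n) ℝ)
  (d : Fin m → ℝ) (M : Matrix (Fin n) (Fin n) ℝ) (Ω₁ Ω₂ : Finset (Fin n))

noncomputable def mixedRegObjective (f : Fin n → ℝ) : ℝ :=
  (1 / 2) * enormSq (S *ᵥ (d - A *ᵥ f)) + (1 / 2) * ∑ ℓ ∈ Ω₁, |(M *ᵥ f) ℓ|
    + (1 / 2) * ∑ ℓ ∈ Ω₂, (M *ᵥ f) ℓ ^ 2

noncomputable def mixedRegQuadForm (f : Fin n → ℝ) : ℝ :=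
  enormSq (S *ᵥ (A *ᵥ f)) + ∑ ℓ ∈ Ω₂, (M *ᵥ f) ℓ ^ 2

lemma mixedRegQuadForm_nonneg (f : Fin n → ℝ) : 0 ≤ mixedRegQuadForm S A M Ω₂ f :=
  add_nonneg (enormSq_nonneg _) (Finset.sum_nonneg fun _ _ => sq_nonneg _)

lemma mixedRegQuadForm_smul (r : ℝ) (f : Fin n → ℝ) :
    mixedRegQuadForm S A M Ω₂ (r • f) = r ^ 2 * mixedRegQuadForm S A M Ω₂ f := by
  simp only [mixedRegQuadForm, Matrix.mulVec_smul, enormSq_smul, Pi.smul_apply, smul_eq_mul,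
    mul_pow, Finset.mul_sum, mul_add]

lemma continuous_mixedRegQuadForm : Continuous (mixedRegQuadForm S A M Ω₂) := by
  unfold mixedRegQuadForm enormSq; fun_prop

lemma continuous_mixedRegObjective : Continuous (mixedRegObjective S A d M Ω₁ Ω₂) := by
  unfold mixedRegObjective enormSq; fun_prop

lemma mixedRegObjective_add_smul_le {a b : ℝ} (ha : 0 < a) (hb : 0 < b) (hab : a + b = 1)
    (x y : Fin n → ℝ) :
    mixedRegObjective S A d M Ω₁ Ω₂ (a • x + b • y)
      ≤ a * mixedRegObjective S A d M Ω₁ Ω₂ x + b * mixedRegObjective S A d M Ω₁ Ω₂ y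
        - a * b * ((1 / 2) * mixedRegQuadForm S A M Ω₂ (x - y)) := by
  have hMf : ∀ ℓ, (M *ᵥ (a • x + b • y)) ℓ = a * (M *ᵥ x) ℓ + b * (M *ᵥ y) ℓ := fun ℓ => by
    simp only [Matrix.mulVec_add, Matrix.mulVec_smul, Pi.add_apply, Pi.smul_apply, smul_eq_mul]
  have hres : ∀ i, (S *ᵥ (d - A *ᵥ (a • x + b • y))) i
      = a * (S *ᵥ (d - A *ᵥ x)) i + b * (S *ᵥ (d - A *ᵥ y)) i := fun i => by
    simp only [Matrix.mulVec_sub, Matrix.mulVec_add, Matrix.mulVec_smul, Pi.sub_apply,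
      Pi.add_apply, Pi.smul_apply, smul_eq_mul]
    linear_combination (-(S *ᵥ d) i) * hab
  have hfit : enormSq (S *ᵥ (d - A *ᵥ (a • x + b • y)))
      = a * enormSq (S *ᵥ (d - A *ᵥ x)) + b * enormSq (S *ᵥ (d - A *ᵥ y))
        - a * b * enormSq (S *ᵥ (A *ᵥ (x - y))) := by
    simp only [enormSq, hres, Finset.sum_sq_add_mul_of_add_eq_one _ _ _ hab, Matrix.mulVec_sub,
      Pi.sub_apply]
    ring_nf
  have hsq : ∑ ℓ ∈ Ω₂, (M *ᵥ (a • x + b • y)) ℓ ^ 2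
      = a * ∑ ℓ ∈ Ω₂, (M *ᵥ x) ℓ ^ 2 + b * ∑ ℓ ∈ Ω₂, (M *ᵥ y) ℓ ^ 2
        - a * b * ∑ ℓ ∈ Ω₂, (M *ᵥ (x - y)) ℓ ^ 2 := by
    simp only [hMf, Finset.sum_sq_add_mul_of_add_eq_one _ _ _ hab, Matrix.mulVec_sub, Pi.sub_apply]
  have habs : ∑ ℓ ∈ Ω₁, |(M *ᵥ (a • x + b • y)) ℓ|
      ≤ a * ∑ ℓ ∈ Ω₁, |(M *ᵥ x) ℓ| + b * ∑ ℓ ∈ Ω₁, |(M *ᵥ y) ℓ| := by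
    simp only [Finset.mul_sum, ← Finset.sum_add_distrib, hMf]
    refine Finset.sum_le_sum fun ℓ _ => (abs_add_le _ _).trans_eq ?_
    rw [abs_mul, abs_mul, abs_of_pos ha, abs_of_pos hb]
  simp only [mixedRegObjective, mixedRegQuadForm, hfit, hsq]
  linarith

lemma mixedRegObjective_ge (f : Fin n → ℝ) :
    (1 / 4) * mixedRegQuadForm S A M Ω₂ f - (1 / 2) * enormSq (S *ᵥ d)
      ≤ mixedRegObjective S A d M Ω₁ Ω₂ f := by
  have hfit := half_enormSq_sub_le (S *ᵥ d) (S *ᵥ (A *ᵥ f))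
  rw [← Matrix.mulVec_sub] at hfit
  have habs : 0 ≤ ∑ ℓ ∈ Ω₁, |(M *ᵥ f) ℓ| := Finset.sum_nonneg fun _ _ => abs_nonneg _
  have hsq : 0 ≤ ∑ ℓ ∈ Ω₂, (M *ᵥ f) ℓ ^ 2 := Finset.sum_nonneg fun _ _ => sq_nonneg _
  simp only [mixedRegObjective, mixedRegQuadForm]
  linarith

end Subproblem

theorem stmt3_general (m n : ℕ) (S : Matrix (Fin m) (Fin m) ℝ) (A : Matrix (Fin m) (Fin n) ℝ)
    (d : Fin m → ℝ) (M : Matrix (Fin n) (Fin n) ℝ)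
    (Ω₁ Ω₂ : Finset (Fin n))
    (hposdef : ∀ f : Fin n → ℝ,
      enormSq (S.mulVec (A.mulVec f)) + ∑ ℓ ∈ Ω₂, (M.mulVec f ℓ) ^ 2 = 0 → f = 0)
    (J : (Fin n → ℝ) → ℝ)
    (hJ : ∀ f, J f = (1 / 2) * enormSq (S.mulVec (d - A.mulVec f))
      + (1 / 2) * ∑ ℓ ∈ Ω₁, |M.mulVec f ℓ|
      + (1 / 2) * ∑ ℓ ∈ Ω₂, (M.mulVec f ℓ) ^ 2) :
    StrictConvexOn ℝ Set.univ J ∧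
      ∃! f : Fin n → ℝ, ∀ g : Fin n → ℝ, J f ≤ J g := by
  obtain rfl : J = mixedRegObjective S A d M Ω₁ Ω₂ := funext hJ
  have hQpos : ∀ f ≠ 0, 0 < mixedRegQuadForm S A M Ω₂ f := fun f hf =>
    (mixedRegQuadForm_nonneg S A M Ω₂ f).lt_of_ne' (mt (hposdef f) hf)
  have hstrict : StrictConvexOn ℝ Set.univ (mixedRegObjective S A d M Ω₁ Ω₂) :=
    strictConvexOn_univ_of_le_sub_mul (fun f hf => mul_pos one_half_pos (hQpos f hf))
      fun x y a b ha hb hab => mixedRegObjective_add_smul_le S A d M Ω₁ Ω₂ ha hb hab x y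
  obtain ⟨c, hc, hcQ⟩ := exists_pos_mul_norm_sq_le (continuous_mixedRegQuadForm S A M Ω₂)
    (mixedRegQuadForm_smul S A M Ω₂) hQpos
  have hcoer : Tendsto (mixedRegObjective S A d M Ω₁ Ω₂) (cocompact _) atTop :=
    tendsto_cocompact_atTop_of_mul_norm_sq_sub_le (c := c / 4)
      (K := (1 / 2) * enormSq (S *ᵥ d)) (by positivity) fun f => by
        linarith [hcQ f, mixedRegObjective_ge S A d M Ω₁ Ω₂ f]
  exact ⟨hstrict,
    hstrict.existsUnique_forall_le (continuous_mixedRegObjective S A d M Ω₁ Ω₂) hcoer⟩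

/-- if the quadratic form `f ↦ ‖SAf‖₂² + Σ_{ℓ∈Ω₂}(Mf)_ℓ²` is positive definite,
then the mixed ℓ¹/ℓ² functional
`J f = (1/2)‖S(d − Af)‖₂² + (1/2)Σ_{ℓ∈Ω₁}|(Mf)_ℓ| + (1/2)Σ_{ℓ∈Ω₂}(Mf)_ℓ²`
is strictly convex and has a unique minimizer on `ℝ^n`. -/
theorem stmt3 (m n : ℕ) (S : Matrix (Fin m) (Fin m) ℝ) (A : Matrix (Fin m) (Fin n) ℝ)
    (d : Fin m → ℝ) (M : Matrix (Fin n) (Fin n) ℝ)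
    (Ω₁ Ω₂ : Finset (Fin n)) (hdisj : Disjoint Ω₁ Ω₂) (hunion : Ω₁ ∪ Ω₂ = Finset.univ)
    (hposdef : ∀ f : Fin n → ℝ,
      enormSq (S.mulVec (A.mulVec f)) + ∑ ℓ ∈ Ω₂, (M.mulVec f ℓ) ^ 2 = 0 → f = 0)
    (J : (Fin n → ℝ) → ℝ)
    (hJ : ∀ f, J f = (1 / 2) * enormSq (S.mulVec (d - A.mulVec f))
      + (1 / 2) * ∑ ℓ ∈ Ω₁, |M.mulVec f ℓ|
      + (1 / 2) * ∑ ℓ ∈ Ω₂, (M.mulVec f ℓ) ^ 2) :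
    StrictConvexOn ℝ Set.univ J ∧
      ∃! f : Fin n → ℝ, ∀ g : Fin n → ℝ, J f ≤ J g :=
  stmt3_general m n S A d M Ω₁ Ω₂ hposdef J hJ
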